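/- arXiv:1912.06873 — 4 statements merged into one kernel-verified Lean document; each statement's English description precedes it below -/
import Mathlib

section
/- For a decorated permutation $\sigma$ on $[n]$, the number of weak $i$-excedances is the same for all $i \in [n]$: $|W_i(\sigma)| = |W_j(\sigma)|$ for all $i, j \in [n]$. -/
open Fin.NatCast

/-- The cyclic interval `{a, a+1, ..., a+l-1}` in `Fin n` (taken mod `n`). -/
def cycInterval {n : ℕ} [NeZero n] (a : Fin n) (l : ℕ) : Finset (Fin n) :=
  (Finset.range l).image fun t : ℕ => a + (t : Fin n)

/-- The decorated permutation `π_{k,n}` of `U_{k,n}`: `i ↦ i + (n-k) (mod n)`. -/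
def piU (n k : ℕ) [NeZero n] : Equiv.Perm (Fin n) :=
  Equiv.addRight (((n - k : ℕ)) : Fin n)

/-- The cyclic `i`-order on `Fin n`: `a <_i b` iff `a - i < b - i`. -/
def ltI {n : ℕ} [NeZero n] (i a b : Fin n) : Prop := a - i < b - i

/-- The set of weak `i`-excedances of `σ` with decoration `D`
(`D j = true` meaning an overlined fixed point `j`). -/
noncomputable def weakExcSet {n : ℕ} [NeZero n] (σ : Fin n → Fin n) (D : Fin n → Bool)
    (i : Fin n) : Finset (Fin n) :=
  by classical exact Finset.univ.filter fun j => (σ j = j ∧ D j = true) ∨ ltI i j (σ j)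

/-- The next position after `p` (cyclically) not belonging to the frozen set `F`. -/
noncomputable def nextFree {n : ℕ} [NeZero n] (F : Finset (Fin n)) (p : Fin n) : Fin n :=
  p + ((sInf {t : ℕ | 1 ≤ t ∧ p + (t : Fin n) ∉ F} : ℕ) : Fin n)

/-- The previous position before `p` (cyclically) not belonging to the frozen set `F`. -/
noncomputable def prevFree {n : ℕ} [NeZero n] (F : Finset (Fin n)) (p : Fin n) : Fin n :=
  p - ((sInf {t : ℕ | 1 ≤ t ∧ p - (t : Fin n) ∉ F} : ℕ) : Fin n)

/-- `ρ←_A(π)`: freeze the values in `A` and cyclically shift the remaining values one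
place to the left (skipping frozen positions). -/
noncomputable def rhoL {n : ℕ} [NeZero n] (π : Equiv.Perm (Fin n)) (A : Finset (Fin n)) :
    Fin n → Fin n :=
  fun p => if π p ∈ A then π p
    else π (nextFree (Finset.univ.filter fun q => π q ∈ A) p)

/-- `ρ→_A(π)`: freeze the values in `A` and cyclically shift the remaining values one
place to the right (skipping frozen positions). -/
noncomputable def rhoR {n : ℕ} [NeZero n] (π : Equiv.Perm (Fin n)) (A : Finset (Fin n)) :
    Fin n → Fin n :=
  fun p => if π p ∈ A then π p
    else π (prevFree (Finset.univ.filter fun q => π q ∈ A) p)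

/-!
Writing `x ↦ (x - i).val` for the position of `x` in the `i`-order, the identity
`(j - i) + (σ j - j) = σ j - i` in `Fin n` shows that the `ℕ`-values satisfy
`(j - i).val + (σ j - j).val = (σ j - i).val + n` exactly when `σ j <_i j`, and without the `n`
otherwise. Summing over `j` and using that `σ` permutes the positions, `n` times the number of
`j` with `σ j <_i j` equals the total displacement `∑ j, (σ j - j).val`, which does not involve
`i`. The weak `i`-excedances are exactly the complement of these `j` together with the
underlined fixed points.
-/

open Finset

section
variable {n : ℕ}

theorem Fin.val_add_val_eq_val_add_add_ite (x y : Fin n) :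
    x.val + y.val = (x + y).val + if (x + y).val < x.val then n else 0 := by
  have := y.isLt
  rw [Fin.val_add_eq_ite]
  split_ifs <;> omega

def cyclicDescents (σ : Fin n → Fin n) (i : Fin n) : Finset (Fin n) :=
  univ.filter fun j => σ j - i < j - i

def underlinedFixedPoints (σ : Fin n → Fin n) (D : Fin n → Bool) : Finset (Fin n) :=
  univ.filter fun j => σ j = j ∧ D j = false

theorem card_cyclicDescents_mul [NeZero n] (σ : Equiv.Perm (Fin n)) (i : Fin n) :
    n * #(cyclicDescents σ i) = ∑ j, (σ j - j).val := by
  have h := Finset.sum_congr rfl fun j (_ : j ∈ univ) =>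
    Fin.val_add_val_eq_val_add_add_ite (j - i) (σ j - j)
  simp only [sub_add_sub_cancel', Fin.lt_def.symm, sum_add_distrib] at h
  rw [Equiv.sum_comp σ (fun j => (j - i).val), ← sum_filter, sum_const, smul_eq_mul] at h
  rw [cyclicDescents, mul_comm]
  omega

theorem card_cyclicDescents_eq [NeZero n] (σ : Equiv.Perm (Fin n)) (i j : Fin n) :
    #(cyclicDescents σ i) = #(cyclicDescents σ j) :=
  Nat.eq_of_mul_eq_mul_left (NeZero.pos n) <| by
    rw [card_cyclicDescents_mul, card_cyclicDescents_mul]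

theorem mem_weakExcSet [NeZero n] {σ : Fin n → Fin n} {D : Fin n → Bool} {i j : Fin n} :
    j ∈ weakExcSet σ D i ↔ (σ j = j ∧ D j = true) ∨ j - i < σ j - i := by
  classical
  unfold weakExcSet
  rw [mem_filter, ltI]
  exact and_iff_right (mem_univ j)

theorem weakExcSet_eq_compl [NeZero n] (σ : Fin n → Fin n) (D : Fin n → Bool) (i : Fin n) :
    weakExcSet σ D i = (cyclicDescents σ i ∪ underlinedFixedPoints σ D)ᶜ := by
  ext j
  simp only [mem_weakExcSet, cyclicDescents, underlinedFixedPoints, mem_compl, mem_union,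
    mem_filter, mem_univ, true_and]
  by_cases hj : σ j = j
  · simp [hj]
  · have : σ j - i ≠ j - i := fun h => hj (sub_left_injective h)
    simp only [hj, false_and, false_or, or_false, not_lt]
    exact ⟨le_of_lt, fun h => lt_of_le_of_ne h this.symm⟩

theorem disjoint_cyclicDescents_underlinedFixedPoints (σ : Fin n → Fin n) (D : Fin n → Bool)
    (i : Fin n) : Disjoint (cyclicDescents σ i) (underlinedFixedPoints σ D) := by
  simp only [cyclicDescents, underlinedFixedPoints, disjoint_filter]
  rintro j - hlt ⟨hfix, -⟩
  rw [hfix] at hlt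
  exact lt_irrefl _ hlt

theorem card_weakExcSet_add_card_cyclicDescents [NeZero n] (σ : Fin n → Fin n) (D : Fin n → Bool)
    (i : Fin n) :
    #(weakExcSet σ D i) + #(cyclicDescents σ i) + #(underlinedFixedPoints σ D) = n := by
  rw [add_assoc, ← card_union_of_disjoint (disjoint_cyclicDescents_underlinedFixedPoints σ D i),
    weakExcSet_eq_compl, card_compl_add_card, Fintype.card_fin]

end

/-- for a decorated permutation `σ` on `[n]`, the number of weak
`i`-excedances is independent of `i`. -/
theorem card_weakExc_const (n : ℕ) [NeZero n] (σ : Equiv.Perm (Fin n)) (D : Fin n → Bool) :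
    ∀ i j : Fin n, (weakExcSet (⇑σ) D i).card = (weakExcSet (⇑σ) D j).card := by
  intro i j
  have hi := card_weakExcSet_add_card_cyclicDescents σ D i
  have hj := card_weakExcSet_add_card_cyclicDescents σ D j
  rw [card_cyclicDescents_eq σ i j] at hi
  omega
end

section
/- Let $A \subseteq [n]$ be a union of disjoint cyclic intervals each of size at most $k-1$. Then the decorated permutation $\overleftarrow{\rho_A}(\pi_{k,n})$ has exactly $k-1$ weak 1-excedances (so its positroid has rank $k-1$). -/
/-!
Write `F` for the frozen positions and `gap F p` for the distance from a free position `p` to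
the next free one, so `1 ≤ gap F p ≤ k` because `A` contains no cyclic interval of length `k`.
The map `f = ρ←_A(π_{k,n})` is a permutation moving `j` cyclically by `-k` if `j ∈ F` and by
`gap F j - k` otherwise. The cyclic displacements `(f j - j) mod n` of a permutation sum to
`n` times the number of `j` with `f j < j`; since the gaps add up to `n` around the circle, here
they sum to `n (n - k + 1)` minus `n` for every free `j` with `gap F j = k`, and these `j` are
exactly the undecorated fixed points. Hence anti-excedances and undecorated fixed points number
`n - k + 1` together, leaving `k - 1` weak excedances.
-/

open Fin.NatCast

open Finset Fin.CommRing

theorem Fin.sum_val_sub_eq_mul_card_lt {n : ℕ} {f : Fin n → Fin n}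
    (hf : Function.Injective f) : ∑ j, (f j - j).val = n * #{j | f j < j} := by
  have hterm : ∀ j, (f j - j).val + j.val = (f j).val + if f j < j then n else 0 := by
    intro j
    split_ifs with h
    · rw [Fin.coe_sub_iff_lt.mpr h]; omega
    · rw [Fin.coe_sub_iff_le.mpr (not_lt.mp h)]; omega
  have hperm : ∑ j, (f j).val = ∑ j : Fin n, j.val :=
    (Finite.injective_iff_bijective.mp hf).sum_comp Fin.val
  have hsum := sum_congr (s₁ := univ) rfl fun j _ => hterm j
  rw [sum_add_distrib, sum_add_distrib, hperm, ← sum_filter, sum_const_nat fun _ _ => rfl,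
    mul_comm] at hsum
  omega

section Gap

variable {n : ℕ} [NeZero n]

noncomputable def gap (F : Finset (Fin n)) (p : Fin n) : ℕ :=
  sInf {t : ℕ | 1 ≤ t ∧ p + (t : Fin n) ∉ F}

theorem nextFree_eq_add_gap (F : Finset (Fin n)) (p : Fin n) :
    nextFree F p = p + (gap F p : Fin n) :=
  rfl

variable {F : Finset (Fin n)} {p q : Fin n}

theorem gap_spec (hp : p ∉ F) : 1 ≤ gap F p ∧ p + (gap F p : Fin n) ∉ F :=
  Nat.sInf_mem (s := {t : ℕ | 1 ≤ t ∧ p + (t : Fin n) ∉ F})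
    ⟨n, NeZero.one_le, by simpa using hp⟩

theorem add_mem_of_lt_gap {s : ℕ} (hs : 1 ≤ s) (hsp : s < gap F p) : p + (s : Fin n) ∈ F :=
  not_not.mp fun h => Nat.notMem_of_lt_sInf hsp ⟨hs, h⟩

theorem eq_of_add_eq_add_of_le_gap (hp : p ∉ F) (hq : q ∉ F) {s t : ℕ} (hs : 1 ≤ s)
    (hsp : s ≤ gap F p) (ht : 1 ≤ t) (htq : t ≤ gap F q)
    (h : p + (s : Fin n) = q + (t : Fin n)) : s = t := by
  wlog hst : s ≤ t generalizing p q s t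
  · exact (this hq hp ht htq hs hsp h.symm (by omega)).symm
  by_contra hne
  refine hp ?_
  have hpq : p = q + ((t - s : ℕ) : Fin n) := by
    rw [Nat.cast_sub hst, eq_sub_of_add_eq h]; ring
  exact hpq ▸ add_mem_of_lt_gap (by omega) (by omega)

theorem exists_add_eq_of_le_gap (hq : q ∉ F) (x : Fin n) :
    ∃ p ∉ F, ∃ s, 1 ≤ s ∧ s ≤ gap F p ∧ p + (s : Fin n) = x := by
  set S := {s : ℕ | 1 ≤ s ∧ x - (s : Fin n) ∉ F}
  have hS : S.Nonempty := ⟨n + (x - q).val, by omega, by simpa using hq⟩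
  obtain ⟨hs1, hsF⟩ : sInf S ∈ S := Nat.sInf_mem hS
  set s := sInf S
  refine ⟨x - s, hsF, s, hs1, ?_, sub_add_cancel _ _⟩
  by_contra! hlt
  obtain ⟨hg1, hgF⟩ := gap_spec hsF
  have hmem : x - ((s - gap F (x - s) : ℕ) : Fin n) ∈ F :=
    not_not.mp fun h => Nat.notMem_of_lt_sInf (s := S) (by omega) ⟨by omega, h⟩
  rw [Nat.cast_sub hlt.le, sub_sub_eq_add_sub, add_sub_right_comm] at hmem
  exact hgF hmem

theorem sum_gap (hq : q ∉ F) : ∑ p ∈ univ.filter (· ∉ F), gap F p = n := by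
  -- the arcs `p + [1, gap F p]` over the free positions `p` tile the circle
  have hcard := card_bij (s := (univ.filter (· ∉ F)).sigma fun p => Icc 1 (gap F p))
    (t := univ) (fun x _ => x.1 + (x.2 : Fin n)) (fun _ _ => mem_univ _)
    (by
      rintro ⟨p, s⟩ hps ⟨p', s'⟩ hps' h
      simp only [mem_sigma, mem_filter, mem_univ, true_and, mem_Icc] at hps hps' h
      obtain rfl := eq_of_add_eq_add_of_le_gap hps.1 hps'.1 hps.2.1 hps.2.2 hps'.2.1 hps'.2.2 h
      obtain rfl := add_right_cancel h
      rfl)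
    (by
      intro x _
      obtain ⟨p, hp, s, hs1, hsp, rfl⟩ := exists_add_eq_of_le_gap hq x
      exact ⟨⟨p, s⟩, by simp [hp, hs1, hsp], rfl⟩)
  simpa [card_sigma] using hcard

end Gap

def frozen {n : ℕ} (π : Equiv.Perm (Fin n)) (A : Finset (Fin n)) : Finset (Fin n) :=
  univ.filter fun q => π q ∈ A

theorem mem_frozen {n : ℕ} {π : Equiv.Perm (Fin n)} {A : Finset (Fin n)} {q : Fin n} :
    q ∈ frozen π A ↔ π q ∈ A := by
  simp [frozen]

section Rho

variable {n : ℕ} [NeZero n]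

theorem rhoL_apply (π : Equiv.Perm (Fin n)) (A : Finset (Fin n)) (p : Fin n) :
    rhoL π A p = if p ∈ frozen π A then π p
      else π (p + (gap (frozen π A) p : Fin n)) := by
  simp only [rhoL, mem_frozen, nextFree_eq_add_gap]
  rfl

theorem rhoL_injective (π : Equiv.Perm (Fin n)) (A : Finset (Fin n)) :
    Function.Injective (rhoL π A) := by
  intro a b hab
  simp only [rhoL_apply] at hab
  split_ifs at hab with ha hb hb <;> have h := π.injective hab
  · exact h
  · exact absurd (h ▸ ha) (gap_spec hb).2
  · exact absurd (h ▸ hb) (gap_spec ha).2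
  · rwa [eq_of_add_eq_add_of_le_gap ha hb (gap_spec ha).1 le_rfl (gap_spec hb).1 le_rfl h,
      add_left_inj] at h

end Rho

section PiU

variable {n k : ℕ} [NeZero n] {A : Finset (Fin n)}

theorem pos_of_forall_not_cycInterval_subset (hA : ∀ a : Fin n, ¬ cycInterval a k ⊆ A) :
    0 < k :=
  Nat.pos_of_ne_zero fun hk => hA 0 (by simp [hk, cycInterval])

theorem exists_notMem_frozen (π : Equiv.Perm (Fin n))
    (hA : ∀ a : Fin n, ¬ cycInterval a k ⊆ A) : ∃ q, q ∉ frozen π A := by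
  by_contra! h
  exact hA 0 fun x _ => by simpa using mem_frozen.mp (h (π.symm x))

theorem gap_frozen_piU_le (hA : ∀ a : Fin n, ¬ cycInterval a k ⊆ A) (p : Fin n) :
    gap (frozen (piU n k) A) p ≤ k := by
  by_contra! hlt
  refine hA (piU n k (p + 1)) fun x hx => ?_
  obtain ⟨t, ht, rfl⟩ := mem_image.mp hx
  rw [mem_range] at ht
  have hmem : p + ((t + 1 : ℕ) : Fin n) ∈ frozen (piU n k) A :=
    add_mem_of_lt_gap (by omega) (by omega)
  rw [mem_frozen] at hmem
  convert hmem using 1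
  simp only [piU, Equiv.coe_addRight]
  push_cast
  ring

theorem rhoL_piU_sub (j : Fin n) : rhoL (piU n k) A j - j =
    if j ∈ frozen (piU n k) A then ((n - k : ℕ) : Fin n)
    else ((gap (frozen (piU n k) A) j + (n - k) : ℕ) : Fin n) := by
  rw [rhoL_apply]
  split_ifs <;> simp only [piU, Equiv.coe_addRight] <;> push_cast <;> ring

theorem val_rhoL_piU_sub_add (hkn : k ≤ n) (hA : ∀ a : Fin n, ¬ cycInterval a k ⊆ A)
    (j : Fin n) :
    (rhoL (piU n k) A j - j).val
        + (if j ∉ frozen (piU n k) A ∧ gap (frozen (piU n k) A) j = k then n else 0)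
      = (n - k) + (if j ∉ frozen (piU n k) A then gap (frozen (piU n k) A) j else 0) := by
  have hk := pos_of_forall_not_cycInterval_subset hA
  rw [rhoL_piU_sub]
  by_cases hj : j ∈ frozen (piU n k) A
  · simp only [hj, not_true_eq_false, false_and, if_true, if_false, Fin.val_natCast, add_zero]
    rw [Nat.mod_eq_of_lt (by omega)]
  · have hg1 := (gap_spec hj).1
    have hgk := gap_frozen_piU_le hA j
    simp only [hj, not_false_eq_true, true_and, if_true, if_false, Fin.val_natCast]
    split_ifs with hg
    · rw [hg, Nat.add_sub_cancel' hkn, Nat.mod_self]; omega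
    · rw [Nat.mod_eq_of_lt (by omega)]; omega

theorem rhoL_piU_eq_self_iff (hkn : k ≤ n) (hA : ∀ a : Fin n, ¬ cycInterval a k ⊆ A)
    {j : Fin n} (hj : j ∉ frozen (piU n k) A) :
    rhoL (piU n k) A j = j ↔ gap (frozen (piU n k) A) j = k := by
  have hval := val_rhoL_piU_sub_add hkn hA j
  have hg1 := (gap_spec hj).1
  simp only [hj, not_false_eq_true, true_and, if_true] at hval
  rw [← sub_eq_zero, Fin.ext_iff, Fin.val_zero]
  split_ifs at hval <;> omega

theorem sum_val_rhoL_piU_sub_add (hkn : k ≤ n) (hA : ∀ a : Fin n, ¬ cycInterval a k ⊆ A) :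
    ∑ j, (rhoL (piU n k) A j - j).val
        + n * #{j | j ∉ frozen (piU n k) A ∧ gap (frozen (piU n k) A) j = k}
      = n * (n - k + 1) := by
  obtain ⟨q, hq⟩ := exists_notMem_frozen (piU n k) hA
  have hsum := sum_congr (s₁ := univ) rfl fun j _ => val_rhoL_piU_sub_add hkn hA j
  rw [sum_add_distrib, sum_add_distrib, ← sum_filter, ← sum_filter, sum_gap hq,
    sum_const_nat fun _ _ => rfl, sum_const, card_univ, Fintype.card_fin, smul_eq_mul] at hsum
  rw [mul_comm n, mul_add, mul_one, hsum]

theorem mem_weakExcSet_rhoL_piU_iff (hkn : k ≤ n) (hA : ∀ a : Fin n, ¬ cycInterval a k ⊆ A)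
    (j : Fin n) :
    j ∈ weakExcSet (rhoL (piU n k) A) (fun p => decide (piU n k p = p ∧ piU n k p ∈ A)) 0 ↔
      ¬ (rhoL (piU n k) A j < j
        ∨ j ∉ frozen (piU n k) A ∧ gap (frozen (piU n k) A) j = k) := by
  simp only [weakExcSet, ltI, sub_zero, mem_filter, mem_univ, true_and, decide_eq_true_eq]
  by_cases hj : j ∈ frozen (piU n k) A
  · have hfj : rhoL (piU n k) A j = piU n k j := by rw [rhoL_apply, if_pos hj]
    simp only [hfj, hj, mem_frozen.mp hj, not_true_eq_false, false_and, or_false, and_true,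
      and_self, not_lt]
    omega
  · rw [← rhoL_piU_eq_self_iff hkn hA hj]
    simp only [hj, ← mem_frozen, and_false, false_or, not_false_eq_true, true_and, not_or]
    omega

end PiU

theorem rhoL_rank_general (n k : ℕ) [NeZero n] (hkn : k ≤ n)
    (A : Finset (Fin n)) (hA : ∀ a : Fin n, ¬ cycInterval a k ⊆ A) :
    (weakExcSet (rhoL (piU n k) A)
      (fun p => decide (piU n k p = p ∧ piU n k p ∈ A)) 0).card = k - 1 := by
  set f := rhoL (piU n k) A
  set F := frozen (piU n k) A
  have hW : weakExcSet f (fun p => decide (piU n k p = p ∧ piU n k p ∈ A)) 0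
      = univ.filter fun j => ¬ (f j < j ∨ j ∉ F ∧ gap F j = k) := by
    ext j
    rw [mem_filter, mem_weakExcSet_rhoL_piU_iff hkn hA, and_iff_right (mem_univ j)]
  have hdisj : Disjoint (univ.filter fun j => f j < j)
      (univ.filter fun j => j ∉ F ∧ gap F j = k) :=
    disjoint_filter.mpr fun j _ hlt ⟨hj, hg⟩ =>
      hlt.ne ((rhoL_piU_eq_self_iff hkn hA hj).mpr hg)
  have hcount : #{j | f j < j} + #{j | j ∉ F ∧ gap F j = k} = n - k + 1 := by
    refine Nat.eq_of_mul_eq_mul_left (NeZero.pos n) ?_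
    rw [mul_add, ← Fin.sum_val_sub_eq_mul_card_lt (rhoL_injective _ _),
      sum_val_rhoL_piU_sub_add hkn hA]
  have hsplit := card_filter_add_card_filter_not (s := univ)
    fun j => f j < j ∨ j ∉ F ∧ gap F j = k
  rw [filter_or, card_union_of_disjoint hdisj, hcount, card_univ, Fintype.card_fin] at hsplit
  rw [hW]
  omega

/-- if `A ⊆ [n]` is a union of disjoint cyclic intervals, each of size at
most `k - 1` (equivalently, `A` contains no cyclic interval of length `k`), then
`ρ←_A(π_{k,n})` has exactly `k - 1` weak 1-excedances, so its positroid has rank `k-1`. -/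
theorem rhoL_rank (n k : ℕ) [NeZero n] (hk : 0 < k) (hkn : k ≤ n)
    (A : Finset (Fin n)) (hA : ∀ a : Fin n, ¬ cycInterval a k ⊆ A) :
    (weakExcSet (rhoL (piU n k) A)
      (fun p => decide (piU n k p = p ∧ piU n k p ∈ A)) 0).card = k - 1 :=
  rhoL_rank_general n k hkn A hA
end

section
/- For $A \subseteq [n]$, the inverse of the right cyclic shift of $\pi_{k,n}$ by $A$ equals the left cyclic shift of $\pi_{n-k,n}$ by $B := \pi_{k,n}^{-1}(A)$: $\overrightarrow{\rho_A}(\pi_{k,n})^{-1} = \overleftarrow{\rho_B}(\pi_{n-k,n})$. -/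
/-!
On free positions, `prevFree F` and `nextFree F` are mutually inverse: the nearest free
position before `p` has `p` as its nearest free position after it (the other direction follows
by negating `Fin n`). Hence `ρ→_A(id)` and `ρ←_A(id)` are inverse to each other. The theorem
reduces to this case: precomposing `π` with a translation `t` gives `ρ→_A(π ∘ t) = ρ→_A(π) ∘ t`,
relabelling values by any `τ` gives `ρ←_{τ(A)}(τ ∘ π) = τ ∘ ρ←_A(π)`, and
`π_{n-k,n} = π_{k,n}⁻¹` is a translation.
-/

open Fin.NatCast

open Fin.CommRing

section FreePositions

open Pointwise

variable {n : ℕ} [NeZero n] {F : Finset (Fin n)} {p : Fin n}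

theorem prevFree_spec (hp : p ∉ F) :
    IsLeast {t : ℕ | 1 ≤ t ∧ p - (t : Fin n) ∉ F}
      (sInf {t : ℕ | 1 ≤ t ∧ p - (t : Fin n) ∉ F}) :=
  ⟨Nat.sInf_mem ⟨n, Nat.one_le_iff_ne_zero.2 (NeZero.ne n), by simpa using hp⟩,
    fun _ ht => Nat.sInf_le ht⟩

theorem prevFree_notMem (hp : p ∉ F) : prevFree F p ∉ F :=
  (prevFree_spec hp).1.2

theorem nextFree_prevFree (hp : p ∉ F) : nextFree F (prevFree F p) = p := by
  obtain ⟨⟨hs1, -⟩, -⟩ := prevFree_spec hp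
  unfold nextFree prevFree
  set S := {t : ℕ | 1 ≤ t ∧ p - (t : Fin n) ∉ F}
  set s := sInf S
  suffices hgap : sInf {t : ℕ | 1 ≤ t ∧ p - (s : Fin n) + (t : Fin n) ∉ F} = s by
    rw [hgap, sub_add_cancel]
  refine IsLeast.csInf_eq ⟨⟨hs1, by simpa using hp⟩, fun t ⟨ht1, ht⟩ => ?_⟩
  by_contra! hts
  refine Nat.notMem_of_lt_sInf (s := S) (m := s - t) (by omega) ⟨by omega, ?_⟩
  rwa [Nat.cast_sub hts.le, sub_sub_eq_add_sub, add_sub_right_comm]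

theorem nextFree_eq_neg_prevFree_neg (F : Finset (Fin n)) (p : Fin n) :
    nextFree F p = -prevFree (-F) (-p) := by
  simp only [nextFree, prevFree, Finset.mem_neg', neg_sub', neg_neg, sub_neg_eq_add]

theorem prevFree_eq_neg_nextFree_neg (F : Finset (Fin n)) (p : Fin n) :
    prevFree F p = -nextFree (-F) (-p) := by
  rw [nextFree_eq_neg_prevFree_neg, neg_neg, neg_neg, neg_neg]

theorem prevFree_nextFree (hp : p ∉ F) : prevFree F (nextFree F p) = p := by
  have hnp : -p ∉ -F := by rwa [Finset.mem_neg', neg_neg]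
  rw [nextFree_eq_neg_prevFree_neg F p, prevFree_eq_neg_nextFree_neg, neg_neg,
    nextFree_prevFree hnp, neg_neg]

theorem nextFree_notMem (hp : p ∉ F) : nextFree F p ∉ F := by
  rw [nextFree_eq_neg_prevFree_neg, ← Finset.mem_neg']
  exact prevFree_notMem (by rwa [Finset.mem_neg', neg_neg])

end FreePositions

section Rotations

variable {n : ℕ} [NeZero n]

theorem prevFree_add_right {F G : Finset (Fin n)} {d : Fin n} (hG : ∀ q, q ∈ G ↔ q + d ∈ F)
    (p : Fin n) : prevFree G p + d = prevFree F (p + d) := by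
  simp only [prevFree, hG, sub_add_eq_add_sub]

theorem rhoR_mul_addRight (π : Equiv.Perm (Fin n)) (A : Finset (Fin n)) (d x : Fin n) :
    rhoR (π * Equiv.addRight d) A x = rhoR π A (x + d) := by
  have hF := prevFree_add_right (F := Finset.univ.filter fun q => π q ∈ A)
    (G := Finset.univ.filter fun q => (π * Equiv.addRight d) q ∈ A)
    (d := d) (fun q => by rw [Finset.mem_filter_univ, Finset.mem_filter_univ]; rfl) x
  rw [rhoR, rhoR, ← hF]
  rfl

theorem rhoL_mul_left (τ π : Equiv.Perm (Fin n)) (A : Finset (Fin n)) (y : Fin n) :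
    rhoL (τ * π) (A.image τ) y = τ (rhoL π A y) := by
  simp only [rhoL, Equiv.Perm.mul_apply, τ.injective.mem_finset_image]
  split_ifs <;> rfl

theorem rhoR_one (A : Finset (Fin n)) (x : Fin n) :
    rhoR 1 A x = if x ∈ A then x else prevFree A x := by
  change (if x ∈ A then x else prevFree (Finset.univ.filter (· ∈ A)) x) = _
  rw [Finset.filter_univ_mem]

theorem rhoL_one (A : Finset (Fin n)) (y : Fin n) :
    rhoL 1 A y = if y ∈ A then y else nextFree A y := by
  change (if y ∈ A then y else nextFree (Finset.univ.filter (· ∈ A)) y) = _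
  rw [Finset.filter_univ_mem]

theorem rhoL_one_rhoR_one (A : Finset (Fin n)) (x : Fin n) : rhoL 1 A (rhoR 1 A x) = x := by
  by_cases hx : x ∈ A
  · simp [rhoR_one, rhoL_one, hx]
  · simp [rhoR_one, rhoL_one, hx, prevFree_notMem hx, nextFree_prevFree hx]

theorem rhoR_one_rhoL_one (A : Finset (Fin n)) (y : Fin n) : rhoR 1 A (rhoL 1 A y) = y := by
  by_cases hy : y ∈ A
  · simp [rhoR_one, rhoL_one, hy]
  · simp [rhoR_one, rhoL_one, hy, nextFree_notMem hy, prevFree_nextFree hy]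

end Rotations

theorem piU_sub_eq_symm {n k : ℕ} [NeZero n] (hk : k ≤ n) : piU n (n - k) = (piU n k).symm := by
  ext x
  simp [piU, Nat.sub_sub_self hk, Nat.cast_sub hk]

/-- `ρ→_A(π_{k,n})⁻¹ = ρ←_B(π_{n-k,n})` where `B = π_{k,n}⁻¹(A)`; stated
as: the two maps are two-sided inverses of each other (as permutations, ignoring
decorations). -/
theorem rhoR_inverse (n k : ℕ) [NeZero n] (hk : k ≤ n) (A : Finset (Fin n)) :
    (∀ x : Fin n,
      rhoL (piU n (n - k)) (A.image ⇑(piU n k).symm) (rhoR (piU n k) A x) = x) ∧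
    (∀ x : Fin n,
      rhoR (piU n k) A (rhoL (piU n (n - k)) (A.image ⇑(piU n k).symm) x) = x) := by
  have hR : ∀ x, rhoR (piU n k) A x = rhoR 1 A (piU n k x) := fun x => by
    have h := rhoR_mul_addRight 1 A ((n - k : ℕ) : Fin n) x
    rw [one_mul] at h
    exact h
  have hL : ∀ y, rhoL (piU n (n - k)) (A.image (piU n k).symm) y = (piU n k).symm (rhoL 1 A y) :=
    fun y => by simpa only [piU_sub_eq_symm hk, mul_one] using rhoL_mul_left (piU n k).symm 1 A y
  refine ⟨fun x => ?_, fun y => ?_⟩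
  · rw [hR, hL, rhoL_one_rhoR_one, Equiv.symm_apply_apply]
  · rw [hL, hR, Equiv.apply_symm_apply, rhoR_one_rhoL_one]
end

section
/- Let $P$ be a matroid on $[n]$ whose circuits are exactly: the cyclic intervals $L_1, \ldots, L_m$ (pairwise disjoint unions with frozen intervals covering at most $k-1$ elements in total) together with all $k$-subsets of $[n]$ containing no $L_j$. Then every $(k+1)$-subset of $[n]$ is a union of circuits of $P$; hence the positroid $P_{\overleftarrow{\rho_A}(\pi_{k,n})}$ is a quotient of $U_{k,n}$. -/
open Fin.NatCast

/-! Let `L j` be the interval of length `k - l j` starting at `a j + l j`, and let `O` have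
`k + 1` elements. Two distinct `L i, L j ⊆ O` have sizes adding up to at least `k + 1`, so if
`u ∈ O` lies in none of the `L j ⊆ O`, these are pairwise intersecting cyclic intervals avoiding
`u`. Cut open at `u` they are intervals of a line, so by Helly's theorem they share a point
`y ≠ u` of `O`. Then `O.erase y` is a `k`-subset containing no `L j`, and it contains `u`; hence
`O` is the union of the `L j ⊆ O` and of such sets `O.erase y`. -/

lemma Fin.val_sub_eq_ite {n : ℕ} (a b : Fin n) :
    (a - b).val = if b ≤ a then a.val - b.val else n + a.val - b.val := by
  split_ifs with h
  · exact Fin.coe_sub_iff_le.2 h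
  · exact Fin.coe_sub_iff_lt.2 (not_le.1 h)

section CycInterval

variable {n : ℕ} [NeZero n] {s u x : Fin n} {d : ℕ}

lemma mem_cycInterval_iff (hd : d ≤ n) : u ∈ cycInterval s d ↔ (u - s).val < d := by
  simp only [cycInterval, Finset.mem_image, Finset.mem_range]
  constructor
  · rintro ⟨t, ht, rfl⟩
    rwa [add_sub_cancel_left, Fin.val_cast_of_lt (ht.trans_le hd)]
  · exact fun h => ⟨(u - s).val, h, by rw [Fin.cast_val_eq_self, add_sub_cancel]⟩

lemma card_cycInterval (hd : d ≤ n) : (cycInterval s d).card = d := by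
  rw [cycInterval, Finset.card_image_of_injOn, Finset.card_range]
  intro t₁ h₁ t₂ h₂ h
  have h₁ : t₁ < n := (Finset.mem_range.1 h₁).trans_le hd
  have h₂ : t₂ < n := (Finset.mem_range.1 h₂).trans_le hd
  simpa [Fin.val_cast_of_lt h₁, Fin.val_cast_of_lt h₂] using congrArg Fin.val (add_left_cancel h)

/-- Measured clockwise from a point `x` outside it, a cyclic interval does not wrap around. -/
lemma val_sub_eq_add_of_mem_cycInterval (hd : d ≤ n) (hx : x ∉ cycInterval s d)
    (hu : u ∈ cycInterval s d) : (u - x).val = (s - x).val + (u - s).val := by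
  rw [mem_cycInterval_iff hd] at hx hu
  have := u.isLt; have := s.isLt; have := x.isLt
  simp only [Fin.val_sub_eq_ite, Fin.le_def] at *
  split_ifs at * <;> omega

end CycInterval

/-- Helly's theorem for cyclic intervals missing a common point `x`: cutting the circle at `x`
turns them into intervals of a line, and the one starting farthest from `x` starts inside all
the others. -/
lemma exists_forall_mem_cycInterval {n : ℕ} [NeZero n] {ι : Type*} {F : Finset ι}
    (hF : F.Nonempty) {x : Fin n} {s : ι → Fin n} {d : ι → ℕ} (hd : ∀ i ∈ F, d i ≤ n)
    (hx : ∀ i ∈ F, x ∉ cycInterval (s i) (d i))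
    (hinter : ∀ i ∈ F, ∀ j ∈ F, (cycInterval (s i) (d i) ∩ cycInterval (s j) (d j)).Nonempty) :
    ∃ y, ∀ i ∈ F, y ∈ cycInterval (s i) (d i) := by
  obtain ⟨i₀, hi₀, hfarthest⟩ := F.exists_max_image (fun i => (s i - x).val) hF
  refine ⟨s i₀, fun i hi => ?_⟩
  obtain ⟨z, hz⟩ := hinter i hi i₀ hi₀
  rw [Finset.mem_inter] at hz
  have hzi := val_sub_eq_add_of_mem_cycInterval (hd i hi) (hx i hi) hz.1
  have hzi₀ := val_sub_eq_add_of_mem_cycInterval (hd i₀ hi₀) (hx i₀ hi₀) hz.2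
  have hle : (s i - x).val ≤ (s i₀ - x).val := hfarthest i hi
  have hz := (mem_cycInterval_iff (hd i hi)).1 hz.1
  rw [mem_cycInterval_iff (hd i hi)]
  have := z.isLt; have := x.isLt; have := (s i).isLt; have := (s i₀).isLt
  simp only [Fin.val_sub_eq_ite, Fin.le_def] at *
  split_ifs at * <;> omega

lemma exists_ne_forall_mem_cycInterval {n : ℕ} [NeZero n] {ι : Type*} {F : Finset ι}
    {s : ι → Fin n} {d : ι → ℕ} {O : Finset (Fin n)} {u : Fin n} (hu : u ∈ O)
    (hO : 2 ≤ O.card) (hd : ∀ i ∈ F, 0 < d i ∧ d i ≤ n)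
    (hsub : ∀ i ∈ F, cycInterval (s i) (d i) ⊆ O.erase u)
    (hlong : ∀ i ∈ F, ∀ j ∈ F, i ≠ j → O.card ≤ d i + d j) :
    ∃ y ∈ O, y ≠ u ∧ ∀ i ∈ F, y ∈ cycInterval (s i) (d i) := by
  rcases F.eq_empty_or_nonempty with rfl | hF
  · obtain ⟨y, hy, hyu⟩ := Finset.exists_mem_ne hO u
    exact ⟨y, hy, hyu, by simp⟩
  have hinter : ∀ i ∈ F, ∀ j ∈ F,
      (cycInterval (s i) (d i) ∩ cycInterval (s j) (d j)).Nonempty := by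
    intro i hi j hj
    rcases eq_or_ne i j with rfl | hij
    · rw [Finset.inter_self, ← Finset.card_pos, card_cycInterval (hd i hi).2]
      exact (hd i hi).1
    refine Finset.inter_nonempty_of_card_lt_card_add_card (hsub i hi) (hsub j hj) ?_
    rw [Finset.card_erase_of_mem hu, card_cycInterval (hd i hi).2, card_cycInterval (hd j hj).2]
    have := hlong i hi j hj hij
    omega
  have hx i (hi : i ∈ F) : u ∉ cycInterval (s i) (d i) :=
    fun h => Finset.notMem_erase u O (hsub i hi h)
  obtain ⟨y, hy⟩ := exists_forall_mem_cycInterval hF (fun i hi => (hd i hi).2) hx hinter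
  obtain ⟨i, hi⟩ := hF
  have hyO := Finset.mem_of_mem_erase (hsub i hi (hy i hi))
  exact ⟨y, hyO, fun h => hx i hi (h ▸ hy i hi), hy⟩

lemma exists_sup_eq_of_forall_exists_mem {α ι : Type*} [DecidableEq α] [Fintype ι]
    (L : ι → Finset α) (O : Finset α)
    (h : ∀ u ∈ O, (∀ j, L j ⊆ O → u ∉ L j) → ∃ y ∈ O, y ≠ u ∧ ∀ j, L j ⊆ O → y ∈ L j) :
    ∃ S : Finset (Finset α), (∀ C ∈ S, (∃ j, C = L j) ∨ (C.card + 1 = O.card ∧ ∀ j, ¬ L j ⊆ C)) ∧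
      S.sup id = O := by
  set E := (O.image O.erase).filter fun C => ∀ j, ¬ L j ⊆ C
  refine ⟨(Finset.univ.filter fun j => L j ⊆ O).image L ∪ E, fun C hC => ?_, ?_⟩
  · rcases Finset.mem_union.1 hC with hC | hC
    · obtain ⟨j, -, rfl⟩ := Finset.mem_image.1 hC
      exact Or.inl ⟨j, rfl⟩
    · obtain ⟨hC, hfree⟩ := Finset.mem_filter.1 hC
      obtain ⟨y, hy, rfl⟩ := Finset.mem_image.1 hC
      exact Or.inr ⟨Finset.card_erase_add_one hy, hfree⟩
  refine le_antisymm (Finset.sup_le fun C hC => ?_) fun u hu => ?_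
  · rcases Finset.mem_union.1 hC with hC | hC
    · obtain ⟨j, hj, rfl⟩ := Finset.mem_image.1 hC
      exact (Finset.mem_filter.1 hj).2
    · obtain ⟨y, -, rfl⟩ := Finset.mem_image.1 (Finset.mem_filter.1 hC).1
      exact Finset.erase_subset y O
  by_cases hcov : ∃ j, L j ⊆ O ∧ u ∈ L j
  · obtain ⟨j, hjO, huj⟩ := hcov
    refine Finset.mem_sup.2 ⟨L j, Finset.mem_union_left _ ?_, huj⟩
    exact Finset.mem_image_of_mem L (Finset.mem_filter.2 ⟨Finset.mem_univ j, hjO⟩)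
  obtain ⟨y, hyO, hyu, hy⟩ := h u hu fun j hjO huj => hcov ⟨j, hjO, huj⟩
  have hE : O.erase y ∈ E := by
    refine Finset.mem_filter.2 ⟨Finset.mem_image_of_mem _ hyO, fun j hj => ?_⟩
    exact Finset.notMem_erase y O (hj (hy j (hj.trans (Finset.erase_subset y O))))
  exact Finset.mem_sup.2 ⟨O.erase y, Finset.mem_union_right _ hE, Finset.mem_erase.2 ⟨hyu.symm, hu⟩⟩

theorem every_circuit_is_union_general (n k m : ℕ) [NeZero n] (hk : 0 < k) (hkn : k < n)
    (a : Fin m → Fin n) (l : Fin m → ℕ)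
    (hsum : ∑ j : Fin m, l j ≤ k - 1)
    (O : Finset (Fin n)) (hO : O.card = k + 1) :
    ∃ S : Finset (Finset (Fin n)),
      (∀ C ∈ S, (∃ j : Fin m, C = cycInterval (a j + (l j : Fin n)) (k - l j)) ∨
        (C.card = k ∧ ∀ j : Fin m, ¬ cycInterval (a j + (l j : Fin n)) (k - l j) ⊆ C)) ∧
      S.sup id = O := by
  set L := fun j => cycInterval (a j + (l j : Fin n)) (k - l j)
  have hlk (j) : l j ≤ k - 1 := (Finset.single_le_sum (by simp) (Finset.mem_univ j)).trans hsum
  have hd (j) : 0 < k - l j ∧ k - l j ≤ n := by have := hlk j; omega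
  have hlong (i j) (hij : i ≠ j) : O.card ≤ (k - l i) + (k - l j) := by
    have : l i + l j ≤ k - 1 := (Finset.sum_pair hij).symm.le.trans
      ((Finset.sum_le_univ_sum_of_nonneg (by simp)).trans hsum)
    omega
  obtain ⟨S, hS, hSO⟩ := exists_sup_eq_of_forall_exists_mem L O fun u hu hout => by
    obtain ⟨y, hyO, hyu, hy⟩ := exists_ne_forall_mem_cycInterval
      (F := Finset.univ.filter fun j => L j ⊆ O) hu (by omega) (fun j _ => hd j)
      (fun j hj => have hjO := (Finset.mem_filter.1 hj).2
        Finset.subset_erase.2 ⟨hjO, hout j hjO⟩)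
      (fun i _ j _ => hlong i j)
    exact ⟨y, hyO, hyu, fun j hj => hy j (Finset.mem_filter.2 ⟨Finset.mem_univ j, hj⟩)⟩
  exact ⟨S, fun C hC => (hS C hC).imp_right (And.imp_left (by omega)), hSO⟩

/-- with `A = J_1 ∪ ⋯ ∪ J_m` a disjoint union of maximal cyclic intervals
`J_j = [a_j, a_j + l_j - 1]` of total size at most `k - 1`, and circuits
`𝒞_A = {L_j} ∪ {k-subsets containing no L_j}` (where `L_j` extends `J_j` clockwise to an
interval of size `k`), every `(k+1)`-subset of `[n]` — i.e. every circuit of `U_{k,n}` —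
is a union of members of `𝒞_A`; hence the positroid of `ρ←_A(π_{k,n})` is a quotient of
`U_{k,n}`. -/
theorem every_circuit_is_union (n k m : ℕ) [NeZero n] (hk : 0 < k) (hkn : k < n)
    (a : Fin m → Fin n) (l : Fin m → ℕ) (hl : ∀ j, 0 < l j)
    (hsum : ∑ j : Fin m, l j ≤ k - 1)
    (hJ : Set.PairwiseDisjoint Set.univ fun j : Fin m => cycInterval (a j) (l j))
    (hmax : ∀ j : Fin m,
      a j + (l j : Fin n) ∉
        Finset.univ.biUnion (fun j' : Fin m => cycInterval (a j') (l j')) ∧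
      a j - 1 ∉ Finset.univ.biUnion (fun j' : Fin m => cycInterval (a j') (l j')))
    (O : Finset (Fin n)) (hO : O.card = k + 1) :
    ∃ S : Finset (Finset (Fin n)),
      (∀ C ∈ S, (∃ j : Fin m, C = cycInterval (a j + (l j : Fin n)) (k - l j)) ∨
        (C.card = k ∧ ∀ j : Fin m, ¬ cycInterval (a j + (l j : Fin n)) (k - l j) ⊆ C)) ∧
      S.sup id = O :=
  every_circuit_is_union_general n k m hk hkn a l hsum O hO
end
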